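/- Collapsing an internal edge of a painted tree corresponds under the bijection Φ to exactly one of the three order-generating moves in 𝔍_n: collapsing an unpainted internal edge removes a domain bracket pair or replaces it by '·'s; collapsing a painted internal edge removes a codomain bracket pair; collapsing a full bunch of painted transition edges replaces ')f(' by '·'. Hence Φ is order-preserving. -/

import Mathlib

/-- Planar rooted trees (associations of a word: each internal node is a
bracketed product of its children). -/
inductive WT : Type
  | lf : WT
  | nd : List WT → WT

/-- Number of leaves (letters). -/
def WT.leaves : WT → ℕ
  | .lf => 1
  | .nd l => (l.attach.map (fun x => WT.leaves x.1)).sum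
decreasing_by
  have := List.sizeOf_lt_of_mem x.2
  simp only [WT.nd.sizeOf_spec]
  omega

/-- A valid association: every internal node has at least two children
(no redundant brackets). -/
def WT.valid : WT → Prop
  | .lf => True
  | .nd l => 2 ≤ l.length ∧ ∀ t ∈ l, t.valid
decreasing_by
  have := List.sizeOf_lt_of_mem ‹t ∈ l›
  simp only [WT.nd.sizeOf_spec]
  omega

/-- `WAdd t t'` : the association `t` is obtained from `t'` by adding one
(non-redundant) pair of brackets around at least two consecutive factors;
equivalently, `t'` is obtained from `t` by collapsing one internal edge. -/
inductive WAdd : WT → WT → Prop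
  | here (l₁ m l₂ : List WT) (hm : 2 ≤ m.length) (h : 1 ≤ l₁.length + l₂.length) :
      WAdd (.nd (l₁ ++ [.nd m] ++ l₂)) (.nd (l₁ ++ m ++ l₂))
  | under (l₁ l₂ : List WT) {a b : WT} (h : WAdd a b) :
      WAdd (.nd (l₁ ++ [a] ++ l₂)) (.nd (l₁ ++ [b] ++ l₂))

/-- A painted tree: the painted region starts at the root; `nd` is an entirely
painted node, while `tr` is a transition node (painted root-side edge, unpainted
trees above it). -/
inductive PT : Type
  | tr : List WT → PT
  | nd : List PT → PT

/-- Number of leaves of a painted tree. -/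
def PT.leaves : PT → ℕ
  | .tr args => (args.map WT.leaves).sum
  | .nd l => (l.attach.map (fun x => PT.leaves x.1)).sum
decreasing_by
  have := List.sizeOf_lt_of_mem x.2
  simp only [PT.nd.sizeOf_spec]
  omega

/-- Validity: transition nodes have at least one unpainted tree above; painted
nodes have at least two children; all unpainted parts are valid. -/
def PT.valid : PT → Prop
  | .tr args => args ≠ [] ∧ ∀ t ∈ args, t.valid
  | .nd l => 2 ≤ l.length ∧ ∀ t ∈ l, PT.valid t
decreasing_by
  have := List.sizeOf_lt_of_mem ‹t ∈ l›
  simp only [PT.nd.sizeOf_spec]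
  omega

/-- `Collapse t t'` : the painted tree `t'` is obtained from `t` by collapsing
one internal edge (or one full bunch of painted edges below a painted node whose
children are all transition nodes). -/
inductive Collapse : PT → PT → Prop
  | painted (l₁ m l₂ : List PT) (hm : 2 ≤ m.length) :
      Collapse (.nd (l₁ ++ [.nd m] ++ l₂)) (.nd (l₁ ++ m ++ l₂))
  | unpaintedRoot (u m v : List WT) (hm : 2 ≤ m.length) :
      Collapse (.tr (u ++ [.nd m] ++ v)) (.tr (u ++ m ++ v))
  | insideW (u v : List WT) {a b : WT} (h : WAdd a b) :
      Collapse (.tr (u ++ [a] ++ v)) (.tr (u ++ [b] ++ v))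
  | bunch (ls : List (List WT)) (h : 2 ≤ ls.length) :
      Collapse (.nd (ls.map PT.tr)) (.tr ls.flatten)
  | under (l₁ l₂ : List PT) {a b : PT} (h : Collapse a b) :
      Collapse (.nd (l₁ ++ [a] ++ l₂)) (.nd (l₁ ++ [b] ++ l₂))

/-- The refinement order on painted trees: `t ≤ t'` iff `t'` is obtained from
`t` by collapsing internal edges. -/
def PT.Refines (t t' : PT) : Prop := Relation.ReflTransGen Collapse t t'

/-- Formal expressions of the poset `𝔍_n`: `f bs` is `f(X₁· ... ·X_k)` (type I
when `k = 1`, type II otherwise), applying `f` to blocks separated by the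
painted-product symbol `·`; `mul l` is a bracketed product of such expressions
in the codomain (type III). -/
inductive JX : Type
  | f : List WT → JX
  | mul : List JX → JX

/-- Number of letters of an expression. -/
def JX.leaves : JX → ℕ
  | .f bs => (bs.map WT.leaves).sum
  | .mul l => (l.attach.map (fun x => JX.leaves x.1)).sum
decreasing_by
  have := List.sizeOf_lt_of_mem x.2
  simp only [JX.mul.sizeOf_spec]
  omega

/-- Validity of expressions. -/
def JX.valid : JX → Prop
  | .f bs => bs ≠ [] ∧ ∀ t ∈ bs, t.valid
  | .mul l => 2 ≤ l.length ∧ ∀ t ∈ l, JX.valid t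
decreasing_by
  have := List.sizeOf_lt_of_mem ‹t ∈ l›
  simp only [JX.mul.sizeOf_spec]
  omega

/-- `JOp P' P` : `P` is obtained from `P'` by one of the three generating
moves of `𝔍_n` (so `P ≺ P'`): adding a bracket pair in the domain, adding a
bracket pair in the codomain, replacing `·` by `)f(`, or removing consecutive
`·`s by adding an enclosing bracket pair. -/
inductive JOp : JX → JX → Prop
  | domBracket (u v : List WT) {t t' : WT} (h : WAdd t' t) :
      JOp (.f (u ++ [t] ++ v)) (.f (u ++ [t'] ++ v))
  | codBracket (l₁ m l₂ : List JX) (hm : 2 ≤ m.length)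
      (h : 1 ≤ l₁.length + l₂.length) :
      JOp (.mul (l₁ ++ m ++ l₂)) (.mul (l₁ ++ [.mul m] ++ l₂))
  | dotToF (ls : List (List WT)) (h : 2 ≤ ls.length) :
      JOp (.f ls.flatten) (.mul (ls.map JX.f))
  | remDots (u m v : List WT) (hm : 2 ≤ m.length) :
      JOp (.f (u ++ m ++ v)) (.f (u ++ [.nd m] ++ v))
  | under (l₁ l₂ : List JX) {a b : JX} (h : JOp a b) :
      JOp (.mul (l₁ ++ [a] ++ l₂)) (.mul (l₁ ++ [b] ++ l₂))

/-- The order on `𝔍_n`: `P ≤ P'` iff `P` is obtained from `P'` by a sequence of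
the generating moves. -/
def JX.Le (P P' : JX) : Prop := Relation.ReflTransGen JOp P' P

/-! ### Auxiliary machinery for the proof -/

section Aux

/-- Structural induction principle for `PT`. -/
lemma PT.recAux (P : PT → Prop) (htr : ∀ a, P (.tr a))
    (hnd : ∀ l, (∀ t ∈ l, P t) → P (.nd l)) : ∀ t, P t := by
  have key : ∀ n, ∀ t : PT, sizeOf t ≤ n → P t := by
    intro n
    induction n with
    | zero =>
      intro t h
      cases t with
      | tr a => exact htr a
      | nd l => exact hnd l (fun t ht => by
          have := List.sizeOf_lt_of_mem ht
          simp only [PT.nd.sizeOf_spec] at h; omega)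
    | succ n ih =>
      intro t h
      cases t with
      | tr a => exact htr a
      | nd l => exact hnd l (fun t ht => ih t (by
          have := List.sizeOf_lt_of_mem ht
          simp only [PT.nd.sizeOf_spec] at h; omega))
  exact fun t => key (sizeOf t) t le_rfl

/-- Structural induction principle for `JX`. -/
lemma JX.recAux (P : JX → Prop) (hf : ∀ a, P (.f a))
    (hmul : ∀ l, (∀ t ∈ l, P t) → P (.mul l)) : ∀ t, P t := by
  have key : ∀ n, ∀ t : JX, sizeOf t ≤ n → P t := by
    intro n
    induction n with
    | zero =>
      intro t h
      cases t with
      | f a => exact hf a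
      | mul l => exact hmul l (fun t ht => by
          have := List.sizeOf_lt_of_mem ht
          simp only [JX.mul.sizeOf_spec] at h; omega)
    | succ n ih =>
      intro t h
      cases t with
      | f a => exact hf a
      | mul l => exact hmul l (fun t ht => ih t (by
          have := List.sizeOf_lt_of_mem ht
          simp only [JX.mul.sizeOf_spec] at h; omega))
  exact fun t => key (sizeOf t) t le_rfl

/-- The bijection `Φ` on underlying trees/expressions. -/
def toJX : PT → JX
  | .tr args => .f args
  | .nd l => .mul (l.attach.map fun x => toJX x.1)
decreasing_by
  have := List.sizeOf_lt_of_mem x.2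
  simp only [PT.nd.sizeOf_spec]
  omega

/-- Inverse of `Φ`. -/
def toPT : JX → PT
  | .f args => .tr args
  | .mul l => .nd (l.attach.map fun x => toPT x.1)
decreasing_by
  have := List.sizeOf_lt_of_mem x.2
  simp only [JX.mul.sizeOf_spec]
  omega

@[simp] lemma toJX_tr (a : List WT) : toJX (.tr a) = .f a := by rw [toJX]
@[simp] lemma toJX_nd (l : List PT) : toJX (.nd l) = .mul (l.map toJX) := by
  rw [toJX, List.attach_map_val]
@[simp] lemma toPT_f (a : List WT) : toPT (.f a) = .tr a := by rw [toPT]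
@[simp] lemma toPT_mul (l : List JX) : toPT (.mul l) = .nd (l.map toPT) := by
  rw [toPT, List.attach_map_val]

lemma toPT_toJX (t : PT) : toPT (toJX t) = t := by
  induction t using PT.recAux with
  | htr a => simp
  | hnd l ih =>
    simp only [toJX_nd, toPT_mul, List.map_map]
    congr 1
    conv_rhs => rw [← List.map_id l]
    exact List.map_congr_left (fun x hx => ih x hx)

lemma toJX_toPT (x : JX) : toJX (toPT x) = x := by
  induction x using JX.recAux with
  | hf a => simp
  | hmul l ih =>
    simp only [toPT_mul, toJX_nd, List.map_map]
    congr 1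
    conv_rhs => rw [← List.map_id l]
    exact List.map_congr_left (fun x hx => ih x hx)

@[simp] lemma PT.leaves_tr (a : List WT) :
    PT.leaves (.tr a) = (a.map WT.leaves).sum := by rw [PT.leaves]
@[simp] lemma PT.leaves_nd (l : List PT) :
    PT.leaves (.nd l) = (l.map PT.leaves).sum := by
  rw [PT.leaves, List.attach_map_val]
@[simp] lemma JX.leaves_f (a : List WT) :
    JX.leaves (.f a) = (a.map WT.leaves).sum := by rw [JX.leaves]
@[simp] lemma JX.leaves_mul (l : List JX) :
    JX.leaves (.mul l) = (l.map JX.leaves).sum := by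
  rw [JX.leaves, List.attach_map_val]

lemma leaves_toJX (t : PT) : JX.leaves (toJX t) = PT.leaves t := by
  induction t using PT.recAux with
  | htr a => simp
  | hnd l ih =>
    simp only [toJX_nd, JX.leaves_mul, PT.leaves_nd, List.map_map]
    congr 1
    exact List.map_congr_left (fun x hx => ih x hx)

lemma WT.valid_nd (l : List WT) :
    WT.valid (.nd l) = (2 ≤ l.length ∧ ∀ t ∈ l, t.valid) := by rw [WT.valid]
lemma PT.valid_tr (a : List WT) :
    PT.valid (.tr a) = (a ≠ [] ∧ ∀ t ∈ a, t.valid) := by rw [PT.valid]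
lemma PT.valid_nd (l : List PT) :
    PT.valid (.nd l) = (2 ≤ l.length ∧ ∀ t ∈ l, PT.valid t) := by rw [PT.valid]
lemma JX.valid_f (a : List WT) :
    JX.valid (.f a) = (a ≠ [] ∧ ∀ t ∈ a, t.valid) := by rw [JX.valid]
lemma JX.valid_mul (l : List JX) :
    JX.valid (.mul l) = (2 ≤ l.length ∧ ∀ t ∈ l, JX.valid t) := by rw [JX.valid]

lemma valid_toJX (t : PT) : JX.valid (toJX t) ↔ PT.valid t := by
  induction t using PT.recAux with
  | htr a => simp [PT.valid_tr, JX.valid_f]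
  | hnd l ih =>
    simp only [toJX_nd, JX.valid_mul, PT.valid_nd, List.length_map]
    constructor
    · rintro ⟨h1, h2⟩
      exact ⟨h1, fun t ht => (ih t ht).1 (h2 _ (List.mem_map_of_mem ht))⟩
    · rintro ⟨h1, h2⟩
      refine ⟨h1, fun x hx => ?_⟩
      obtain ⟨t, ht, rfl⟩ := List.mem_map.1 hx
      exact (ih t ht).2 (h2 t ht)

/-- `WAdd` preserves validity. -/
lemma WAdd.valid : ∀ {a b : WT}, WAdd a b → a.valid → b.valid := by
  intro a b h
  induction h with
  | here l₁ m l₂ hm h =>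
    intro hv
    rw [WT.valid_nd] at hv ⊢
    obtain ⟨h1, h2⟩ := hv
    have hmv : WT.valid (.nd m) := h2 _ (by simp)
    rw [WT.valid_nd] at hmv
    constructor
    · simp only [List.length_append, List.length_cons] at h1 ⊢; omega
    · intro t ht
      simp only [List.append_assoc, List.mem_append] at ht
      rcases ht with ht | ht | ht
      · exact h2 t (by simp [ht])
      · exact hmv.2 t ht
      · exact h2 t (by simp [ht])
  | under l₁ l₂ h ih =>
    intro hv
    rw [WT.valid_nd] at hv ⊢
    obtain ⟨h1, h2⟩ := hv
    constructor
    · simpa using h1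
    · intro t ht
      simp only [List.append_assoc, List.mem_append, List.mem_singleton] at ht
      rcases ht with ht | rfl | ht
      · exact h2 t (by simp [ht])
      · exact ih (h2 _ (by simp))
      · exact h2 t (by simp [ht])

/-- One collapse corresponds to one generating move, and preserves validity. -/
lemma collapse_step : ∀ {a b : PT}, Collapse a b → PT.valid a →
    JOp (toJX b) (toJX a) ∧ PT.valid b := by
  intro a b h
  induction h with
  | painted l₁ m l₂ hm =>
    intro hv
    rw [PT.valid_nd] at hv
    obtain ⟨h1, h2⟩ := hv
    have hmv : PT.valid (.nd m) := h2 _ (by simp)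
    rw [PT.valid_nd] at hmv
    constructor
    · have := JOp.codBracket (l₁.map toJX) (m.map toJX) (l₂.map toJX)
        (by simpa) (by
          simp only [List.length_append, List.length_cons, List.length_nil,
            List.length_map] at h1 ⊢
          omega)
      simpa using this
    · rw [PT.valid_nd]
      constructor
      · simp only [List.length_append] at h1 ⊢; omega
      · intro t ht
        simp only [List.append_assoc, List.mem_append] at ht
        rcases ht with ht | ht | ht
        · exact h2 t (by simp [ht])
        · exact hmv.2 t ht
        · exact h2 t (by simp [ht])
  | unpaintedRoot u m v hm =>
    intro hv
    rw [PT.valid_tr] at hv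
    obtain ⟨h1, h2⟩ := hv
    have hmv : WT.valid (.nd m) := h2 _ (by simp)
    rw [WT.valid_nd] at hmv
    constructor
    · simpa using JOp.remDots u m v hm
    · rw [PT.valid_tr]
      constructor
      · intro hemp
        have : m = [] := by
          rcases List.append_eq_nil_iff.1 hemp with ⟨h', -⟩
          exact (List.append_eq_nil_iff.1 h').2
        simp [this] at hm
      · intro t ht
        simp only [List.append_assoc, List.mem_append] at ht
        rcases ht with ht | ht | ht
        · exact h2 t (by simp [ht])
        · exact hmv.2 t ht
        · exact h2 t (by simp [ht])
  | insideW u v h =>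
    intro hv
    rw [PT.valid_tr] at hv
    obtain ⟨h1, h2⟩ := hv
    constructor
    · simpa using JOp.domBracket u v h
    · rw [PT.valid_tr]
      refine ⟨by simp, ?_⟩
      intro t ht
      simp only [List.append_assoc, List.mem_append, List.mem_singleton] at ht
      rcases ht with ht | rfl | ht
      · exact h2 t (by simp [ht])
      · exact h.valid (h2 _ (by simp))
      · exact h2 t (by simp [ht])
  | bunch ls h =>
    intro hv
    rw [PT.valid_nd] at hv
    obtain ⟨h1, h2⟩ := hv
    constructor
    · have := JOp.dotToF ls h
      simpa [List.map_map, Function.comp_def] using this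
    · rw [PT.valid_tr]
      constructor
      · intro hemp
        obtain ⟨x, hx⟩ := List.exists_mem_of_length_pos (show 0 < ls.length by omega)
        have hvx : PT.valid (.tr x) := h2 _ (List.mem_map_of_mem hx)
        rw [PT.valid_tr] at hvx
        exact hvx.1 ((List.flatten_eq_nil_iff.1 hemp) x hx)
      · intro t ht
        obtain ⟨l, hl, htl⟩ := List.mem_flatten.1 ht
        have hvl : PT.valid (.tr l) := h2 _ (List.mem_map_of_mem hl)
        rw [PT.valid_tr] at hvl
        exact hvl.2 t htl
  | @under l₁ l₂ a' b' h ih =>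
    intro hv
    rw [PT.valid_nd] at hv
    obtain ⟨h1, h2⟩ := hv
    have hav := h2 a' (by simp)
    obtain ⟨hop, hbv⟩ := ih hav
    constructor
    · have := JOp.under (l₁.map toJX) (l₂.map toJX) hop
      simpa using this
    · rw [PT.valid_nd]
      constructor
      · simpa using h1
      · intro t ht
        simp only [List.append_assoc, List.mem_append, List.mem_singleton] at ht
        rcases ht with ht | rfl | ht
        · exact h2 t (by simp [ht])
        · exact hbv
        · exact h2 t (by simp [ht])

lemma refines_valid {a b : PT} (h : PT.Refines a b) (hv : a.valid) : b.valid := by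
  induction h with
  | refl => exact hv
  | tail h₁ h₂ ih => exact (collapse_step h₂ ih).2

lemma refines_mono {a b : PT} (h : PT.Refines a b) (hv : a.valid) :
    Relation.ReflTransGen JOp (toJX b) (toJX a) := by
  induction h with
  | refl => exact .refl
  | tail h₁ h₂ ih =>
    exact Relation.ReflTransGen.head (collapse_step h₂ (refines_valid h₁ hv)).1 ih

end Aux

/-- Collapsing an internal edge of a painted tree corresponds under the
bijection `Φ` to exactly one of the three order-generating moves of `𝔍_n`
(collapsing an unpainted edge removes a domain bracket pair or replaces it by
`·`s; collapsing a painted edge removes a codomain bracket pair; collapsing a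
bunch of painted edges replaces `)f(` by `·`); hence `Φ` is order-preserving. -/
theorem phi_step_and_monotone (n : ℕ) :
    ∃ Φ : {t : PT // t.valid ∧ t.leaves = n} ≃ {x : JX // x.valid ∧ x.leaves = n},
      (∀ t t' : {t : PT // t.valid ∧ t.leaves = n},
        Collapse t.1 t'.1 → JOp (Φ t').1 (Φ t).1) ∧
      (∀ t t' : {t : PT // t.valid ∧ t.leaves = n},
        PT.Refines t.1 t'.1 → JX.Le (Φ t).1 (Φ t').1) := by
  refine ⟨⟨fun t => ⟨toJX t.1, (valid_toJX t.1).2 t.2.1, by rw [leaves_toJX]; exact t.2.2⟩,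
    fun x => ⟨toPT x.1, (valid_toJX _).1 (by rw [toJX_toPT]; exact x.2.1),
      by rw [← leaves_toJX, toJX_toPT]; exact x.2.2⟩,
    fun t => Subtype.ext (toPT_toJX t.1), fun x => Subtype.ext (toJX_toPT x.1)⟩, ?_, ?_⟩
  · intro t t' h
    exact (collapse_step h t.2.1).1
  · intro t t' h
    exact refines_mono h t.2.1
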